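/- arXiv:2303.16114 — 4 statements merged into one kernel-verified Lean document; each statement's English description precedes it below -/
import Mathlib

section
/- Let R be a commutative ring and (g₁,g₂) ∈ H(R), i.e. g₁ = (a,b;c,d), g₂ = (a′,b′;c′,d′) ∈ GL₂(R) with det g₁ = det g₂. If the conjugate τ̂⁻¹ · ι(g₁,g₂) · τ̂ has vanishing lower-left 2×2 block (i.e. lies in the Siegel parabolic P(R)), then a′ = a, b′ = −b, c′ = −c and d′ = d. Consequently the intersection ι(H(R)) ∩ τ̂·P(R)·τ̂⁻¹ is exactly the set {ι(A, Ã) : A = (a,b;c,d) ∈ GL₂(R), Ã = (a,−b;−c,d)}, a copy of GL₂(R). -/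
open Matrix

/-- The antisymmetric form defining `GSp₄`. -/
def Jmat (R : Type*) [CommRing R] : Matrix (Fin 4) (Fin 4) R :=
  !![0, 0, 0, 1;
     0, 0, 1, 0;
     0, -1, 0, 0;
     -1, 0, 0, 0]

/-- The embedding `ι : GL₂ ×_{GL₁} GL₂ → GL₄` (on the level of matrices). -/
def iota {R : Type*} [CommRing R] (g₁ g₂ : Matrix (Fin 2) (Fin 2) R) :
    Matrix (Fin 4) (Fin 4) R :=
  !![g₁ 0 0, 0, 0, g₁ 0 1;
     0, g₂ 0 0, g₂ 0 1, 0;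
     0, g₂ 1 0, g₂ 1 1, 0;
     g₁ 1 0, 0, 0, g₁ 1 1]

/-- The element `τ̂ = τ · w₁`. -/
def tauHat (R : Type*) [CommRing R] : Matrix (Fin 4) (Fin 4) R :=
  !![1, 0, 0, 0;
     1, 0, 1, 0;
     0, -1, 0, 0;
     0, 1, 0, 1]

/-- Membership in `GSp₄(R)`: `gᵀ J g = ν J` for some unit `ν`. -/
def InGSp4 {R : Type*} [CommRing R] (g : Matrix (Fin 4) (Fin 4) R) : Prop :=
  ∃ ν : Rˣ, gᵀ * Jmat R * g = (ν : R) • Jmat R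

/-- Membership in the Siegel parabolic `P(R)`: in `GSp₄(R)` with vanishing
lower-left `2 × 2` block. -/
def InSiegelP {R : Type*} [CommRing R] (g : Matrix (Fin 4) (Fin 4) R) : Prop :=
  InGSp4 g ∧ g 2 0 = 0 ∧ g 2 1 = 0 ∧ g 3 0 = 0 ∧ g 3 1 = 0


lemma tauHat_inv {R : Type*} [CommRing R] :
    (tauHat R)⁻¹ = !![1, 0, 0, 0; 0, 0, -1, 0; -1, 1, 0, 0; 0, 0, 1, 1] := by
  apply Matrix.inv_eq_right_inv
  ext i j
  fin_cases i <;> fin_cases j <;>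
    simp [tauHat, Matrix.mul_apply, Fin.sum_univ_four, Matrix.one_apply,
      Matrix.vecHead, Matrix.vecTail]

lemma tauHat_inv_mul {R : Type*} [CommRing R] :
    (tauHat R)⁻¹ * tauHat R = 1 := by
  rw [tauHat_inv]
  ext i j
  fin_cases i <;> fin_cases j <;>
    simp [tauHat, Matrix.mul_apply, Fin.sum_univ_four, Matrix.one_apply,
      Matrix.vecHead, Matrix.vecTail]

lemma tauHat_mul_inv {R : Type*} [CommRing R] :
    tauHat R * (tauHat R)⁻¹ = 1 := by
  rw [tauHat_inv]
  ext i j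
  fin_cases i <;> fin_cases j <;>
    simp [tauHat, Matrix.mul_apply, Fin.sum_univ_four, Matrix.one_apply,
      Matrix.vecHead, Matrix.vecTail]

set_option maxHeartbeats 1000000 in
theorem stmt2 {R : Type*} [CommRing R] :
    -- if the conjugate `τ̂⁻¹ ι(g₁,g₂) τ̂` has vanishing lower-left 2×2 block,
    -- then `g₂` is obtained from `g₁` by negating the off-diagonal entries
    (∀ g₁ g₂ : Matrix (Fin 2) (Fin 2) R, IsUnit g₁.det → IsUnit g₂.det →
      g₁.det = g₂.det →
      (((tauHat R)⁻¹ * iota g₁ g₂ * tauHat R) 2 0 = 0 ∧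
       ((tauHat R)⁻¹ * iota g₁ g₂ * tauHat R) 2 1 = 0 ∧
       ((tauHat R)⁻¹ * iota g₁ g₂ * tauHat R) 3 0 = 0 ∧
       ((tauHat R)⁻¹ * iota g₁ g₂ * tauHat R) 3 1 = 0) →
      g₂ 0 0 = g₁ 0 0 ∧ g₂ 0 1 = -g₁ 0 1 ∧ g₂ 1 0 = -g₁ 1 0 ∧ g₂ 1 1 = g₁ 1 1) ∧
    -- consequently `ι(H(R)) ∩ τ̂·P(R)·τ̂⁻¹ = {ι(A, Ã) : A ∈ GL₂(R)}`
    {m : Matrix (Fin 4) (Fin 4) R |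
        (∃ g₁ g₂ : Matrix (Fin 2) (Fin 2) R, IsUnit g₁.det ∧ IsUnit g₂.det ∧
          g₁.det = g₂.det ∧ m = iota g₁ g₂) ∧
        ∃ q : Matrix (Fin 4) (Fin 4) R, InSiegelP q ∧
          m = tauHat R * q * (tauHat R)⁻¹} =
      {m : Matrix (Fin 4) (Fin 4) R | ∃ a b c d : R,
        IsUnit (Matrix.det !![a, b; c, d]) ∧
        m = iota !![a, b; c, d] !![a, -b; -c, d]} := by
  have part1 : ∀ g₁ g₂ : Matrix (Fin 2) (Fin 2) R, IsUnit g₁.det → IsUnit g₂.det →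
      g₁.det = g₂.det →
      (((tauHat R)⁻¹ * iota g₁ g₂ * tauHat R) 2 0 = 0 ∧
       ((tauHat R)⁻¹ * iota g₁ g₂ * tauHat R) 2 1 = 0 ∧
       ((tauHat R)⁻¹ * iota g₁ g₂ * tauHat R) 3 0 = 0 ∧
       ((tauHat R)⁻¹ * iota g₁ g₂ * tauHat R) 3 1 = 0) →
      g₂ 0 0 = g₁ 0 0 ∧ g₂ 0 1 = -g₁ 0 1 ∧ g₂ 1 0 = -g₁ 1 0 ∧ g₂ 1 1 = g₁ 1 1 := by
    intro g₁ g₂ _ _ _ h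
    obtain ⟨h1, h2, h3, h4⟩ := h
    rw [tauHat_inv] at h1 h2 h3 h4
    simp [iota, tauHat, Matrix.mul_apply, Fin.sum_univ_four, Matrix.vecHead,
      Matrix.vecTail] at h1 h2 h3 h4
    refine ⟨by linear_combination h1, by linear_combination -h2,
      by linear_combination h3, by linear_combination -h4⟩
  refine ⟨part1, ?_⟩
  ext m
  simp only [Set.mem_setOf_eq]
  constructor
  · rintro ⟨⟨g₁, g₂, hu1, hu2, hdet, hm⟩, q, ⟨_, hq1, hq2, hq3, hq4⟩, hmq⟩
    have hq : (tauHat R)⁻¹ * m * tauHat R = q := by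
      rw [hmq, ← Matrix.mul_assoc, ← Matrix.mul_assoc, tauHat_inv_mul,
        Matrix.one_mul, Matrix.mul_assoc, tauHat_inv_mul, Matrix.mul_one]
    rw [hm] at hq
    obtain ⟨e1, e2, e3, e4⟩ := part1 g₁ g₂ hu1 hu2 hdet
      (by rw [hq]; exact ⟨hq1, hq2, hq3, hq4⟩)
    refine ⟨g₁ 0 0, g₁ 0 1, g₁ 1 0, g₁ 1 1, ?_, ?_⟩
    · rwa [← Matrix.eta_fin_two g₁]
    · rw [hm]
      have hg1 : g₁ = !![g₁ 0 0, g₁ 0 1; g₁ 1 0, g₁ 1 1] := Matrix.eta_fin_two g₁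
      have hg2 : g₂ = !![g₁ 0 0, -g₁ 0 1; -g₁ 1 0, g₁ 1 1] := by
        rw [Matrix.eta_fin_two g₂, e1, e2, e3, e4]
      rw [← hg1, ← hg2]
  · rintro ⟨a, b, c, d, hu, hm⟩
    have hdet2 : (!![a, -b; -c, d] : Matrix (Fin 2) (Fin 2) R).det =
        (!![a, b; c, d] : Matrix (Fin 2) (Fin 2) R).det := by
      simp [Matrix.det_fin_two_of]
    have hu2 : IsUnit (!![a, -b; -c, d] : Matrix (Fin 2) (Fin 2) R).det := by
      rw [hdet2]; exact hu
    set q : Matrix (Fin 4) (Fin 4) R :=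
      !![a, b, 0, b; c, d, c, 0; 0, 0, a, -b; 0, 0, -c, d] with hqdef
    have hgsp : InGSp4 q := by
      refine ⟨hu.unit, ?_⟩
      rw [hu.unit_spec, Matrix.det_fin_two_of]
      ext i j
      fin_cases i <;> fin_cases j <;>
        simp [hqdef, Jmat, Matrix.mul_apply, Fin.sum_univ_four, Matrix.vecHead,
          Matrix.vecTail, Matrix.transpose_apply, Matrix.smul_apply] <;> ring
    refine ⟨⟨!![a, b; c, d], !![a, -b; -c, d], hu, hu2, hdet2.symm, hm⟩,
      q, ⟨hgsp, by simp [hqdef, Matrix.vecHead, Matrix.vecTail], by simp [hqdef, Matrix.vecHead, Matrix.vecTail], by simp [hqdef, Matrix.vecHead, Matrix.vecTail], by simp [hqdef, Matrix.vecHead, Matrix.vecTail]⟩, ?_⟩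
    rw [hm, tauHat_inv, hqdef]
    ext i j
    fin_cases i <;> fin_cases j <;>
      simp [iota, tauHat, Matrix.mul_apply, Fin.sum_univ_four, Matrix.vecHead,
        Matrix.vecTail]
end

section
/- Equip GSp₄(ℚ_p) with the subspace topology induced from the space of 4×4 matrices over ℚ_p. Then the subset H(ℚ_p)·τ̂·P(ℚ_p) = {ι(h)·τ̂·q : h ∈ H(ℚ_p), q ∈ P(ℚ_p)} is an open subset of GSp₄(ℚ_p). -/
open Matrix

/- An element `g` of `GSp₄` lies in `H·τ̂·P` exactly when the minor `cornerMinor g` is a unit,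
which is an open condition. Right multiplication by `q ∈ P` scales this minor by the determinant
of the upper-left block of `q`, a unit, and `cornerMinor (ι(g₁, g₂)·τ̂) = det g₁`. Conversely,
the first two columns of `g` are `J`-isotropic, which gives `det g₁ = det g₂` for the blocks
`g₁, g₂` read off from them; so `M = ι(g₁, g₂)·τ̂` lies in `GSp₄`, shares its first two columns
with `g`, and `M⁻¹ g` lies in `P`. -/

def InHTauHatP {R : Type*} [CommRing R] (g : Matrix (Fin 4) (Fin 4) R) : Prop :=
  ∃ (g₁ g₂ : Matrix (Fin 2) (Fin 2) R) (q : Matrix (Fin 4) (Fin 4) R),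
    IsUnit g₁.det ∧ IsUnit g₂.det ∧ g₁.det = g₂.det ∧ InSiegelP q ∧
    g = iota g₁ g₂ * tauHat R * q

def cornerMinor {R : Type*} [CommRing R] (g : Matrix (Fin 4) (Fin 4) R) : R :=
  g 0 0 * g 3 1 - g 0 1 * g 3 0

section CommRing

variable {R : Type*} [CommRing R]

theorem det_Jmat : (Jmat R).det = 1 := by
  simp [Jmat, det_succ_row_zero, Fin.sum_univ_succ, Fin.succAbove, cons_val, pow_succ]

theorem InGSp4.isUnit_det {g : Matrix (Fin 4) (Fin 4) R} (hg : InGSp4 g) : IsUnit g.det := by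
  obtain ⟨ν, hν⟩ := hg
  have h := congrArg det hν
  rw [det_mul, det_mul, det_transpose, det_smul, det_Jmat, Fintype.card_fin, mul_one,
    mul_one, ← sq] at h
  exact (isUnit_pow_iff two_ne_zero).mp (h ▸ (ν ^ 4).isUnit)

theorem InGSp4.mul {A B : Matrix (Fin 4) (Fin 4) R} (hA : InGSp4 A) (hB : InGSp4 B) :
    InGSp4 (A * B) := by
  obtain ⟨μ, hμ⟩ := hA
  obtain ⟨ν, hν⟩ := hB
  refine ⟨μ * ν, ?_⟩
  calc (A * B)ᵀ * Jmat R * (A * B) = Bᵀ * (Aᵀ * Jmat R * A) * B := by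
        simp only [transpose_mul, Matrix.mul_assoc]
    _ = ((μ * ν : Rˣ) : R) • Jmat R := by
        rw [hμ, Matrix.mul_smul, Matrix.smul_mul, hν, smul_smul, Units.val_mul]

theorem InGSp4.nonsing_inv {A : Matrix (Fin 4) (Fin 4) R} (hA : InGSp4 A) : InGSp4 A⁻¹ := by
  have hdet := hA.isUnit_det
  obtain ⟨ν, hν⟩ := hA
  refine ⟨ν⁻¹, ?_⟩
  have hJ : Jmat R = (ν : R) • ((A⁻¹)ᵀ * Jmat R * A⁻¹) := by
    calc Jmat R = (A * A⁻¹)ᵀ * Jmat R * (A * A⁻¹) := by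
          rw [mul_nonsing_inv _ hdet, transpose_one, Matrix.one_mul, Matrix.mul_one]
      _ = (A⁻¹)ᵀ * (Aᵀ * Jmat R * A) * A⁻¹ := by
          simp only [transpose_mul, Matrix.mul_assoc]
      _ = (ν : R) • ((A⁻¹)ᵀ * Jmat R * A⁻¹) := by
          rw [hν, Matrix.mul_smul, Matrix.smul_mul]
  rw [hJ, smul_smul, Units.inv_mul, one_smul, ← hJ]

theorem inGSp4_iota {g₁ g₂ : Matrix (Fin 2) (Fin 2) R} (hu : IsUnit g₁.det)
    (hdet : g₁.det = g₂.det) : InGSp4 (iota g₁ g₂) := by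
  refine ⟨hu.unit, ?_⟩
  rw [det_fin_two, det_fin_two] at hdet
  ext i j
  fin_cases i <;> fin_cases j <;>
    simp [iota, Jmat, mul_apply, Fin.sum_univ_four, det_fin_two] <;>
    first | ring1 | linear_combination hdet | linear_combination -hdet

theorem inGSp4_tauHat : InGSp4 (tauHat R) := by
  refine ⟨1, ?_⟩
  ext i j
  fin_cases i <;> fin_cases j <;> simp [tauHat, Jmat, mul_apply, Fin.sum_univ_four]

theorem det_eq_of_lowerLeft_eq_zero {q : Matrix (Fin 4) (Fin 4) R} (h20 : q 2 0 = 0)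
    (h21 : q 2 1 = 0) (h30 : q 3 0 = 0) (h31 : q 3 1 = 0) :
    q.det = (q 0 0 * q 1 1 - q 0 1 * q 1 0) * (q 2 2 * q 3 3 - q 2 3 * q 3 2) := by
  simp [det_succ_row_zero, Fin.sum_univ_succ, Fin.succAbove, Fin.castSucc, Fin.castAdd,
    Fin.castLE, h20, h21, h30, h31, show (Fin.succ 2 : Fin 4) = 3 from rfl]
  ring

theorem cornerMinor_mul_of_lowerLeft_eq_zero (A : Matrix (Fin 4) (Fin 4) R)
    {q : Matrix (Fin 4) (Fin 4) R} (h20 : q 2 0 = 0) (h21 : q 2 1 = 0) (h30 : q 3 0 = 0)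
    (h31 : q 3 1 = 0) :
    cornerMinor (A * q) = cornerMinor A * (q 0 0 * q 1 1 - q 0 1 * q 1 0) := by
  simp only [cornerMinor, mul_apply, Fin.sum_univ_four, h20, h21, h30, h31]
  ring

theorem cornerMinor_iota_mul_tauHat (g₁ g₂ : Matrix (Fin 2) (Fin 2) R) :
    cornerMinor (iota g₁ g₂ * tauHat R) = g₁.det := by
  simp [cornerMinor, iota, tauHat, mul_apply, Fin.sum_univ_four, det_fin_two]

theorem InHTauHatP.isUnit_cornerMinor {g : Matrix (Fin 4) (Fin 4) R} (hg : InHTauHatP g) :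
    IsUnit (cornerMinor g) := by
  obtain ⟨g₁, g₂, q, hu, -, -, ⟨hq, h20, h21, h30, h31⟩, rfl⟩ := hg
  have hblock : IsUnit (q 0 0 * q 1 1 - q 0 1 * q 1 0) := by
    have := hq.isUnit_det
    rw [det_eq_of_lowerLeft_eq_zero h20 h21 h30 h31] at this
    exact isUnit_of_mul_isUnit_left this
  rw [cornerMinor_mul_of_lowerLeft_eq_zero _ h20 h21 h30 h31, cornerMinor_iota_mul_tauHat]
  exact hu.mul hblock

/-- The first two columns of `g ∈ GSp₄` span a `J`-isotropic plane. -/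
theorem InGSp4.cornerMinor_eq {g : Matrix (Fin 4) (Fin 4) R} (hg : InGSp4 g) :
    cornerMinor g = g 2 0 * g 1 1 - g 1 0 * g 2 1 := by
  obtain ⟨ν, hν⟩ := hg
  have h01 := congrFun (congrFun hν 0) 1
  simp only [Jmat, mul_apply, transpose_apply, of_apply, cons_val', cons_val_fin_one,
    Fin.sum_univ_four, cons_val_zero, cons_val_one, cons_val, mul_zero, add_zero, mul_neg, mul_one,
    zero_add, neg_mul, Matrix.smul_apply, smul_eq_mul] at h01
  unfold cornerMinor
  linear_combination h01

theorem InGSp4.inHTauHatP {g : Matrix (Fin 4) (Fin 4) R} (hg : InGSp4 g)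
    (hd : IsUnit (cornerMinor g)) : InHTauHatP g := by
  set g₁ : Matrix (Fin 2) (Fin 2) R := !![g 0 0, g 0 1; g 3 0, g 3 1]
  set g₂ : Matrix (Fin 2) (Fin 2) R := !![g 1 0, -g 1 1; g 2 0, -g 2 1]
  set M := iota g₁ g₂ * tauHat R
  have hdet₁ : g₁.det = cornerMinor g := by simp [g₁, det_fin_two, cornerMinor]
  have hdet : g₁.det = g₂.det := by
    rw [hdet₁, hg.cornerMinor_eq, det_fin_two_of]
    ring
  have hM : InGSp4 M := (inGSp4_iota (hdet₁ ▸ hd) hdet).mul inGSp4_tauHat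
  have hMdet := hM.isUnit_det
  have hcols : ∀ k, g k 0 = M k 0 ∧ g k 1 = M k 1 := by
    intro k
    fin_cases k <;> simp [M, g₁, g₂, iota, tauHat]
  have hq : ∀ i, (M⁻¹ * g) i 0 = (1 : Matrix (Fin 4) (Fin 4) R) i 0 ∧
      (M⁻¹ * g) i 1 = (1 : Matrix (Fin 4) (Fin 4) R) i 1 := by
    intro i
    simp only [← nonsing_inv_mul M hMdet, mul_apply, hcols, and_self]
  refine ⟨g₁, g₂, M⁻¹ * g, hdet₁ ▸ hd, hdet ▸ hdet₁ ▸ hd, hdet,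
    ⟨hM.nonsing_inv.mul hg, ?_, ?_, ?_, ?_⟩, ?_⟩
  · simp [(hq 2).1, one_apply]
  · simp [(hq 2).2, one_apply]
  · simp [(hq 3).1, one_apply]
  · simp [(hq 3).2, one_apply]
  · rw [← Matrix.mul_assoc, mul_nonsing_inv M hMdet, Matrix.one_mul]

theorem InGSp4.inHTauHatP_iff {g : Matrix (Fin 4) (Fin 4) R} (hg : InGSp4 g) :
    InHTauHatP g ↔ IsUnit (cornerMinor g) :=
  ⟨InHTauHatP.isUnit_cornerMinor, hg.inHTauHatP⟩

end CommRing

theorem continuous_cornerMinor {R : Type*} [CommRing R] [TopologicalSpace R]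
    [IsTopologicalRing R] : Continuous (cornerMinor : Matrix (Fin 4) (Fin 4) R → R) := by
  unfold cornerMinor
  fun_prop

/-- The subset `H(ℚ_p)·τ̂·P(ℚ_p)` is open in `GSp₄(ℚ_p)` (with the subspace
topology induced from the space of `4×4` matrices over `ℚ_p`). -/
theorem stmt3 (p : ℕ) [Fact p.Prime] :
    IsOpen {g : {m : Matrix (Fin 4) (Fin 4) ℚ_[p] // InGSp4 m} |
      ∃ (g₁ g₂ : Matrix (Fin 2) (Fin 2) ℚ_[p]) (q : Matrix (Fin 4) (Fin 4) ℚ_[p]),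
        IsUnit g₁.det ∧ IsUnit g₂.det ∧ g₁.det = g₂.det ∧ InSiegelP q ∧
        (g : Matrix (Fin 4) (Fin 4) ℚ_[p]) = iota g₁ g₂ * tauHat ℚ_[p] * q} := by
  convert (Units.isOpen (R := ℚ_[p])).preimage
    (continuous_cornerMinor.comp continuous_subtype_val) using 1
  ext g
  exact g.2.inHTauHatP_iff
end

section
/- Let R be a commutative ring and x, y, z ∈ R with 1+x ∈ R×. Define M₁ = ((x+1) − yz/(x+1), y/(x+1); −z, 1) and M₂ = (1,0;0,x+1) in GL₂(R), and let q(x,y,z) be the 4×4 matrix with rows (x+1, y, 0, y/(x+1)), (0, x+1, 0, 0), (0, 0, 1, −y/(x+1)), (0, 0, 0, 1). Then det M₁ = det M₂ = x+1 (so (M₁,M₂) ∈ H(R)), q(x,y,z) lies in the Siegel parabolic P(R) with similitude factor x+1, and the matrix identity ι(M₁,M₂) · τ̂ · n̄(x,y,z) = τ̂ · q(x,y,z) holds in GL₄(R). -/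
open Matrix

/-- The unipotent element `n̄(x,y,z)` of the opposite Siegel parabolic. -/
def nbar {R : Type*} [CommRing R] (x y z : R) : Matrix (Fin 4) (Fin 4) R :=
  !![1, 0, 0, 0;
     0, 1, 0, 0;
     x, y, 1, 0;
     z, x, 0, 1]

/-- The first `GL₂`-component `M₁` of the `H`-part of the Iwasawa-type
decomposition of `τ̂ n̄(x,y,z) τ̂⁻¹`. Here `y/(x+1)` etc. are interpreted via
`Ring.inverse`. -/
noncomputable def Mone {R : Type*} [CommRing R] (x y z : R) : Matrix (Fin 2) (Fin 2) R :=
  !![(x + 1) - y * z * Ring.inverse (x + 1), y * Ring.inverse (x + 1);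
     -z, 1]

/-- The second `GL₂`-component `M₂`. -/
def Mtwo {R : Type*} [CommRing R] (x : R) : Matrix (Fin 2) (Fin 2) R :=
  !![1, 0; 0, x + 1]

/-- The parabolic part `q(x,y,z)`. -/
noncomputable def qmat {R : Type*} [CommRing R] (x y : R) : Matrix (Fin 4) (Fin 4) R :=
  !![x + 1, y, 0, y * Ring.inverse (x + 1);
     0, x + 1, 0, 0;
     0, 0, 1, -(y * Ring.inverse (x + 1));
     0, 0, 0, 1]

set_option maxHeartbeats 1000000 in
theorem stmt4 {R : Type*} [CommRing R] (x y z : R) (hx : IsUnit (1 + x)) :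
    (Mone x y z).det = x + 1 ∧
    (Mtwo x).det = x + 1 ∧
    InSiegelP (qmat x y) ∧
    (qmat x y)ᵀ * Jmat R * qmat x y = (x + 1) • Jmat R ∧
    iota (Mone x y z) (Mtwo x) * tauHat R * nbar x y z = tauHat R * qmat x y := by
  have hx' : IsUnit (x + 1) := by rwa [add_comm]
  have hinv : Ring.inverse (x + 1) = Ring.inverse (1 + x) := by rw [add_comm]
  have hu : (1 + x) * Ring.inverse (1 + x) = 1 := Ring.mul_inverse_cancel _ hx
  have ht : (qmat x y)ᵀ =
      !![x+1, 0, 0, 0; y, x+1, 0, 0; 0, 0, 1, 0;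
         y * Ring.inverse (x+1), 0, -(y * Ring.inverse (x+1)), 1] := by
    ext i j
    fin_cases i <;> fin_cases j <;> simp [qmat, Matrix.vecHead, Matrix.vecTail]
  have hJ : (qmat x y)ᵀ * Jmat R * qmat x y = (x + 1) • Jmat R := by
    rw [ht]
    ext i j
    fin_cases i <;> fin_cases j <;>
      simp [qmat, Jmat, Matrix.mul_apply, Fin.sum_univ_four, Matrix.vecHead, Matrix.vecTail,
        hinv]
    any_goals ring
    all_goals first
      | linear_combination y * hu
      | linear_combination -(y * hu)
      | linear_combination y * z * hu
      | linear_combination -(y * z) * hu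
      | linear_combination y * z * Ring.inverse (1 + x) * hu
      | linear_combination -(y * z * Ring.inverse (1 + x)) * hu
  refine ⟨?_, ?_, ⟨⟨hx'.unit, by simpa using hJ⟩,
    by simp [qmat, Matrix.vecHead, Matrix.vecTail],
    by simp [qmat, Matrix.vecHead, Matrix.vecTail],
    by simp [qmat, Matrix.vecHead, Matrix.vecTail],
    by simp [qmat, Matrix.vecHead, Matrix.vecTail]⟩, hJ, ?_⟩
  · simp [Mone, Matrix.det_fin_two_of, hinv]
    ring
  · simp [Mtwo, Matrix.det_fin_two_of]
  · ext i j
    fin_cases i <;> fin_cases j <;>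
      simp [iota, Mone, Mtwo, tauHat, nbar, qmat, Matrix.mul_apply, Fin.sum_univ_four,
        Matrix.vecHead, Matrix.vecTail, hinv]
    any_goals ring
    all_goals first
      | linear_combination y * hu
      | linear_combination -(y * hu)
      | linear_combination y * z * hu
      | linear_combination -(y * z) * hu
      | linear_combination y * z * Ring.inverse (1 + x) * hu
      | linear_combination -(y * z * Ring.inverse (1 + x)) * hu
end

section
/- Let p be a prime, k ≥ 1 an integer, and x, y, z ∈ p^k·ℤ_p. Then there exist h ∈ H(ℤ_p) and q ∈ P(ℤ_p) ∩ GSp₄(ℤ_p) such that τ̂ · n̄(x,y,z) = ι(h) · τ̂ · q, and moreover every entry of ι(h) − 1 and every entry of q − 1 lies in p^k·ℤ_p (i.e. both h and q are congruent to the identity modulo p^k). -/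
open Matrix

set_option maxHeartbeats 1000000 in
/-- If `n̄ = n̄(x,y,z)` is congruent to `1` modulo `p^k` (`k ≥ 1`), then
`τ̂ n̄ = ι(h) τ̂ q` with `h ∈ H(ℤ_p)` and `q ∈ P(ℤ_p) ∩ GSp₄(ℤ_p)` both
congruent to `1` modulo `p^k`. -/
theorem stmt5 (p : ℕ) [Fact p.Prime] (k : ℕ) (hk : 1 ≤ k) (x y z : ℤ_[p])
    (hx : (p : ℤ_[p]) ^ k ∣ x) (hy : (p : ℤ_[p]) ^ k ∣ y)
    (hz : (p : ℤ_[p]) ^ k ∣ z) :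
    ∃ g₁ g₂ : Matrix (Fin 2) (Fin 2) ℤ_[p], ∃ q : Matrix (Fin 4) (Fin 4) ℤ_[p],
      -- `h = (g₁, g₂) ∈ H(ℤ_p)`
      IsUnit g₁.det ∧ IsUnit g₂.det ∧ g₁.det = g₂.det ∧
      -- `q ∈ P(ℤ_p) ∩ GSp₄(ℤ_p)`
      InSiegelP q ∧
      -- the decomposition `τ̂ n̄(x,y,z) = ι(h) τ̂ q`
      tauHat ℤ_[p] * nbar x y z = iota g₁ g₂ * tauHat ℤ_[p] * q ∧
      -- both `h` and `q` are congruent to the identity modulo `p^k`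
      (∀ i j : Fin 4, (p : ℤ_[p]) ^ k ∣ (iota g₁ g₂ - 1) i j) ∧
      (∀ i j : Fin 4, (p : ℤ_[p]) ^ k ∣ (q - 1) i j) := by
  have hpx : (p : ℤ_[p]) ∣ x := (dvd_pow_self (p : ℤ_[p]) (Nat.one_le_iff_ne_zero.mp hk)).trans hx
  have hux : IsUnit (1 + x) := by
    rw [PadicInt.isUnit_iff]
    by_contra h
    have hlt : ‖(1 + x : ℤ_[p])‖ < 1 := lt_of_le_of_ne (PadicInt.norm_le_one _) h
    have h2 : (p : ℤ_[p]) ∣ (1 + x) := (PadicInt.norm_lt_one_iff_dvd _).mp hlt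
    have h1 : (p : ℤ_[p]) ∣ 1 := (dvd_add_right hpx).mp (by simpa [add_comm] using h2)
    have := (PadicInt.norm_lt_one_iff_dvd (1 : ℤ_[p])).mpr h1
    simp at this
  obtain ⟨w, hinv⟩ : ∃ w : ℤ_[p], (1 + x) * w = 1 := by
    obtain ⟨u, hu⟩ := hux
    exact ⟨((u⁻¹ : ℤ_[p]ˣ) : ℤ_[p]), by rw [← hu]; exact_mod_cast u.mul_inv⟩
  have hw1 : (p : ℤ_[p]) ^ k ∣ w - 1 := by
    have h3 : w - 1 = -(w * x) := by linear_combination hinv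
    rw [h3]
    exact dvd_neg.mpr (hx.mul_left w)
  refine ⟨!![1, 0; z, 1], !![1 + x, -(y * w); 0, w],
    !![1, 0, 0, 0; 0, 1 + x, 0, 0; 0, 0, w, 0; 0, 0, 0, 1], ?_, ?_, ?_, ?_, ?_, ?_, ?_⟩
  · simp [Matrix.det_fin_two_of]
  · rw [Matrix.det_fin_two_of]; rw [show (1+x)*w - -(y*w)*0 = (1+x)*w by ring, hinv]; simp
  · rw [Matrix.det_fin_two_of, Matrix.det_fin_two_of]
    rw [show (1+x)*w - -(y*w)*0 = (1+x)*w by ring, hinv]; ring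
  · refine ⟨⟨1, ?_⟩, by simp [Matrix.vecHead, Matrix.vecTail], by simp [Matrix.vecHead, Matrix.vecTail], by simp [Matrix.vecHead, Matrix.vecTail], by simp [Matrix.vecHead, Matrix.vecTail]⟩
    rw [Units.val_one, one_smul]
    ext i j
    fin_cases i <;> fin_cases j <;>
      simp [Jmat, Matrix.mul_apply, Fin.sum_univ_four, Matrix.transpose_apply,
        Matrix.vecHead, Matrix.vecTail] <;>
      linear_combination hinv
  · ext i j
    fin_cases i <;> fin_cases j <;>
      simp [tauHat, nbar, iota, Matrix.mul_apply, Fin.sum_univ_four,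
        Matrix.vecHead, Matrix.vecTail] <;>
      first
        | linear_combination (-y) * hinv
        | linear_combination -hinv
  · intro i j
    fin_cases i <;> fin_cases j <;>
      simp [iota, Matrix.sub_apply, Matrix.one_apply, Matrix.vecHead, Matrix.vecTail] <;>
      first
        | exact dvd_zero _
        | exact hx
        | exact hz
        | exact hw1
        | exact hy.mul_right w
  · intro i j
    fin_cases i <;> fin_cases j <;>
      simp [Matrix.sub_apply, Matrix.one_apply, Matrix.vecHead, Matrix.vecTail] <;>
      first
        | exact dvd_zero _
        | exact hx
        | exact hw1
end
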